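/- For every natural number k ≥ 0, the umbral identity (B−1)(B−2)···(B−k) = (−1)^k D_k holds, i.e., Σ over the expansion of the falling factorial (x−1)^{\underline{k}} evaluated at x = B with B^n replaced by the Bell number B_n equals (−1)^k times the k-th derangement number D_k. -/

import Mathlib

open Finset

/-- Stirling numbers of the second kind. -/
def S2 : ℕ → ℕ → ℕ
  | 0, 0 => 1
  | 0, _ + 1 => 0
  | _ + 1, 0 => 0
  | n + 1, k + 1 => (k + 1) * S2 n (k + 1) + S2 n k

/-- Bell numbers. -/
def bell (n : ℕ) : ℕ := ∑ k ∈ Finset.range (n + 1), S2 n k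

/-- r-Stirling numbers of the second kind. -/
def rS2 (r : ℕ) : ℕ → ℕ → ℕ
  | 0, 0 => 1
  | 0, _ + 1 => 0
  | n + 1, 0 => r * rS2 r n 0
  | n + 1, k + 1 => rS2 r n k + (k + 1 + r) * rS2 r n (k + 1)

/-- Unsigned r-Stirling numbers of the first kind. -/
def rS1 (r : ℕ) : ℕ → ℕ → ℕ
  | 0, 0 => 1
  | 0, _ + 1 => 0
  | n + 1, 0 => (r + n) * rS1 r n 0
  | n + 1, k + 1 => rS1 r n k + (r + n) * rS1 r n (k + 1)

/-- r-Bell numbers for integer r. -/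
def rBell (n : ℕ) (r : ℤ) : ℤ :=
  ∑ j ∈ Finset.range (n + 1), (n.choose j : ℤ) * r ^ (n - j) * (bell j : ℤ)

/-- r-Bell numbers for natural r, via r-Stirling numbers. -/
def rBellNat (n r : ℕ) : ℕ := ∑ k ∈ Finset.range (n + 1), rS2 r n k

section UmbralAux
open Polynomial

lemma S2_eq_zero : ∀ n k, n < k → S2 n k = 0 := by
  intro n
  induction n with
  | zero => intro k h; cases k with
    | zero => omega
    | succ k => rfl
  | succ n ih =>
    intro k h
    cases k with
    | zero => omega
    | succ k =>
      show (k + 1) * S2 n (k + 1) + S2 n k = 0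
      rw [ih (k+1) (by omega), ih k (by omega)]
      ring

lemma S2_succ_succ : ∀ n k, S2 (n + 1) (k + 1) = ∑ j ∈ range (n + 1), n.choose j * S2 j k := by
  intro n
  induction n with
  | zero =>
    intro k
    show (k + 1) * S2 0 (k + 1) + S2 0 k = _
    cases k <;> simp [S2]
  | succ n ih =>
    intro k
    show (k + 1) * S2 (n+1) (k + 1) + S2 (n+1) k = _
    rw [Finset.sum_range_succ']
    have pascal : ∀ i, (n+1).choose (i+1) * S2 (i+1) k
        = n.choose i * S2 (i+1) k + n.choose (i+1) * S2 (i+1) k := by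
      intro i
      rw [Nat.choose_succ_succ, add_mul]
    simp only [pascal]
    rw [Finset.sum_add_distrib]
    have h2 : ∑ i ∈ range (n+1), n.choose (i+1) * S2 (i+1) k + (n+1).choose 0 * S2 0 k
        = S2 (n+1) (k+1) := by
      have : (∑ i ∈ range (n+1), n.choose (i+1) * S2 (i+1) k) + n.choose 0 * S2 0 k
          = ∑ j ∈ range (n+2), n.choose j * S2 j k :=
        (Finset.sum_range_succ' (fun j => n.choose j * S2 j k) (n+1)).symm
      rw [Nat.choose_zero_right] at this ⊢
      rw [this, Finset.sum_range_succ, Nat.choose_succ_self, zero_mul, add_zero, ← ih]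
    have h1 : ∑ i ∈ range (n+1), n.choose i * S2 (i+1) k
        = k * S2 (n+1) (k+1) + S2 (n+1) k := by
      cases k with
      | zero =>
        have : ∀ i, S2 (i+1) 0 = 0 := fun i => rfl
        simp [this]
      | succ k' =>
        have expand : ∀ i, n.choose i * S2 (i+1) (k'+1)
            = (k'+1) * (n.choose i * S2 i (k'+1)) + n.choose i * S2 i k' := by
          intro i
          show n.choose i * ((k'+1) * S2 i (k'+1) + S2 i k') = _
          ring
        simp only [expand]
        rw [Finset.sum_add_distrib, ← Finset.mul_sum, ← ih, ← ih]
    rw [add_assoc, h2, h1]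
    ring

lemma bell_succ (n : ℕ) : bell (n + 1) = ∑ j ∈ range (n + 1), n.choose j * bell j := by
  unfold bell
  rw [Finset.sum_range_succ' (fun k => S2 (n+1) k) (n+1)]
  have h0 : S2 (n+1) 0 = 0 := rfl
  rw [h0, add_zero]
  simp only [S2_succ_succ]
  rw [Finset.sum_comm]
  refine Finset.sum_congr rfl fun j hj => ?_
  rw [Finset.mul_sum, ← Finset.mul_sum, ← Finset.mul_sum]
  congr 1
  rw [Finset.mem_range] at hj
  refine (Finset.sum_subset ?_ ?_).symm
  · exact Finset.range_subset_range.2 (by omega)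
  · intro k _ hk
    rw [Finset.mem_range, not_lt] at hk
    exact S2_eq_zero j k (by omega)

noncomputable def L : Polynomial ℤ →ₗ[ℤ] ℤ :=
  Polynomial.lsum (fun n => LinearMap.toSpanSingleton ℤ ℤ (bell n))

lemma L_monomial (n : ℕ) (a : ℤ) : L (monomial n a) = a * bell n := by
  simp [L, Polynomial.lsum_apply, Polynomial.sum_monomial_index,
    LinearMap.toSpanSingleton_apply, smul_eq_mul]

lemma L_C_mul (c : ℤ) (p : Polynomial ℤ) : L (C c * p) = c * L p := by
  rw [← smul_eq_C_mul, map_smul, smul_eq_mul]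

lemma L_X_pow (n : ℕ) : L (X ^ n) = bell n := by
  rw [← Polynomial.monomial_one_right_eq_X_pow, L_monomial, one_mul]

lemma L_X_mul (p : Polynomial ℤ) : L (X * p) = L (p.comp (X + 1)) := by
  induction p using Polynomial.induction_on' with
  | add p q hp hq => rw [mul_add, map_add, hp, hq, add_comp, map_add]
  | monomial n a =>
    rw [X_mul, monomial_mul_X, L_monomial, monomial_comp]
    have : ((X : Polynomial ℤ) + 1) ^ n = ∑ j ∈ range (n + 1),
        C ((n.choose j : ℤ)) * X ^ j := by
      rw [add_pow]
      refine Finset.sum_congr rfl fun j hj => ?_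
      rw [one_pow, ← Polynomial.C_eq_natCast]
      ring
    rw [this, Finset.mul_sum, map_sum]
    have term : ∀ j, L (C a * (C ((n.choose j : ℤ)) * X ^ j)) = a * (n.choose j * bell j) := by
      intro j
      rw [L_C_mul, L_C_mul, L_X_pow]
    simp only [term]
    rw [← Finset.mul_sum, bell_succ]
    push_cast
    ring

lemma L_falling : ∀ n : ℕ, L (∏ i ∈ range n, ((X : Polynomial ℤ) - C (i : ℤ))) = 1 := by
  intro n
  induction n with
  | zero => simpa [bell, S2] using L_X_pow 0
  | succ n ih =>
    rw [Finset.prod_range_succ' (fun i => (X : Polynomial ℤ) - C (i : ℤ)) n]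
    have h0 : ((X : Polynomial ℤ) - C ((0 : ℕ) : ℤ)) = X := by simp
    rw [h0, mul_comm, L_X_mul]
    have hcomp : (∏ i ∈ range n, ((X : Polynomial ℤ) - C ((i+1 : ℕ) : ℤ))).comp (X + 1)
        = ∏ i ∈ range n, ((X : Polynomial ℤ) - C (i : ℤ)) := by
      rw [Polynomial.prod_comp]
      refine Finset.prod_congr rfl fun i _ => ?_
      rw [sub_comp, X_comp, C_comp]
      push_cast [Polynomial.C_add, Polynomial.C_1]
      ring
    rw [hcomp, ih]

lemma sum_eq_L (k : ℕ) :
    ∑ j ∈ Finset.range (k + 1),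
        (∏ i ∈ Finset.range k, ((X : Polynomial ℤ) - C ((i : ℤ) + 1))).coeff j * (bell j : ℤ)
      = L (∏ i ∈ Finset.range k, ((X : Polynomial ℤ) - C ((i : ℤ) + 1))) := by
  have hdeg : (∏ i ∈ Finset.range k, ((X : Polynomial ℤ) - C ((i : ℤ) + 1))).natDegree < k + 1 := by
    refine Nat.lt_succ_of_le (le_trans (Polynomial.natDegree_prod_le _ _) ?_)
    calc ∑ i ∈ range k, ((X : Polynomial ℤ) - C ((i : ℤ) + 1)).natDegree
        ≤ ∑ _i ∈ range k, 1 := Finset.sum_le_sum fun i _ => by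
          rw [Polynomial.natDegree_X_sub_C]
      _ = k := by simp
  rw [show L (∏ i ∈ Finset.range k, ((X : Polynomial ℤ) - C ((i : ℤ) + 1)))
      = (∏ i ∈ Finset.range k, ((X : Polynomial ℤ) - C ((i : ℤ) + 1))).sum
        (fun n a => a * (bell n : ℤ)) by
    simp [L, Polynomial.lsum_apply, LinearMap.toSpanSingleton_apply, smul_eq_mul, Polynomial.sum]]
  rw [Polynomial.sum_over_range' _ (fun n => by simp) (k+1) hdeg]

end UmbralAux

open Polynomial in
theorem umbral_falling_factorial_derangement (k : ℕ) :
    ∑ j ∈ Finset.range (k + 1),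
        (∏ i ∈ Finset.range k, ((X : Polynomial ℤ) - C ((i : ℤ) + 1))).coeff j * (bell j : ℤ)
      = (-1 : ℤ) ^ k * (numDerangements k : ℤ) := by
  rw [sum_eq_L]
  induction k with
  | zero => simpa [bell, S2] using L_X_pow 0
  | succ k ih =>
    rw [Finset.prod_range_succ, mul_sub, mul_comm, map_sub, L_X_mul, mul_comm, ← smul_eq_C_mul,
      map_smul, smul_eq_mul, ih]
    have hcomp : (∏ i ∈ range k, ((X : Polynomial ℤ) - C ((i : ℤ) + 1))).comp (X + 1)
        = ∏ i ∈ range k, ((X : Polynomial ℤ) - C (i : ℤ)) := by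
      rw [Polynomial.prod_comp]
      refine Finset.prod_congr rfl fun i _ => ?_
      rw [sub_comp, X_comp, C_comp]
      push_cast [Polynomial.C_add, Polynomial.C_1]
      ring
    rw [hcomp, L_falling, numDerangements_succ]
    have h1 : ((-1:ℤ)) ^ (k * 2) = 1 := by rw [pow_mul']; norm_num
    ring_nf
    rw [h1]
    ring
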